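/- arXiv:math/0310163 — 3 statements merged into one kernel-verified Lean document; each statement's English description precedes it below -/
import Mathlib

section
/- Let X, Y, U, V, A, B, C be nonzero complex numbers such that (U^n + V^n)(A^n + B^n + C^n) = (X^n + Y^n)(A^n + B^n + C^n) for all positive integers n, and U^3 V^3 = X^3 Y^3. Then {U^3, V^3} = {X^3, Y^3} as unordered pairs (multisets). -/
/-- If two pairs of nonzero complex numbers have the same sum and product,
they are equal as multisets. -/
lemma pair_eq_of_sum_prod (u v x y : ℂ) (hx : x ≠ 0) (hy : y ≠ 0)
    (hm : u * v = x * y) (hs : u + v = x + y) :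
    ({u, v} : Multiset ℂ) = {x, y} := by
  have hq : (u - x) * (u - y) = 0 := by linear_combination u * hs - hm
  rcases mul_eq_zero.mp hq with h1 | h1
  · have hu : u = x := sub_eq_zero.mp h1
    rw [hu] at hm
    have hv : v = y := mul_left_cancel₀ hx hm
    rw [hu, hv]
  · have hu : u = y := sub_eq_zero.mp h1
    rw [hu] at hm
    have hv : v = x := mul_left_cancel₀ hy (by linear_combination hm)
    rw [hu, hv]
    exact Multiset.cons_swap y x 0

theorem cubes_pair_eq_of_power_sums (X Y U V A B C : ℂ)
    (hX : X ≠ 0) (hY : Y ≠ 0) (hU : U ≠ 0) (hV : V ≠ 0)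
    (hA : A ≠ 0) (hB : B ≠ 0) (hC : C ≠ 0)
    (h : ∀ n : ℕ, 0 < n →
      (U ^ n + V ^ n) * (A ^ n + B ^ n + C ^ n)
        = (X ^ n + Y ^ n) * (A ^ n + B ^ n + C ^ n))
    (hprod : U ^ 3 * V ^ 3 = X ^ 3 * Y ^ 3) :
    ({U ^ 3, V ^ 3} : Multiset ℂ) = {X ^ 3, Y ^ 3} := by
  have he3 : A * B * C ≠ 0 := mul_ne_zero (mul_ne_zero hA hB) hC
  have hUV : U * V ≠ 0 := mul_ne_zero hU hV
  have key : ∀ n : ℕ, 0 < n → (A ^ n + B ^ n + C ^ n) ≠ 0 →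
      U ^ n + V ^ n = X ^ n + Y ^ n := fun n hn hne =>
    mul_right_cancel₀ hne (h n hn)
  have hs : U ^ 3 + V ^ 3 = X ^ 3 + Y ^ 3 := by
    by_cases h3 : A ^ 3 + B ^ 3 + C ^ 3 = 0
    · -- p₃ = 0 forces p₁ ≠ 0
      have h1ne : A + B + C ≠ 0 := by
        intro h0
        apply he3
        have h30 : (3 : ℂ) * (A * B * C) = 0 := by
          linear_combination h3 - (A^2 + B^2 + C^2 - A*B - B*C - A*C) * h0
        rcases mul_eq_zero.mp h30 with h' | h'
        · norm_num at h'
        · exact h'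
      have hS : U + V = X + Y := by
        have := key 1 one_pos (by simpa using h1ne)
        simpa using this
      have hPQ : U * V = X * Y := by
        by_cases h2 : A ^ 2 + B ^ 2 + C ^ 2 = 0
        · -- p₂ = p₃ = 0: then p₄ = e₃·e₁ ≠ 0 and p₅ = e₃·e₁² ≠ 0
          have hp4 : A ^ 4 + B ^ 4 + C ^ 4 = (A * B * C) * (A + B + C) := by
            linear_combination (A + B + C) * h3 - ((A+B+C)^2 - (A^2+B^2+C^2))/2 * h2
          have h4ne : A ^ 4 + B ^ 4 + C ^ 4 ≠ 0 := by
            rw [hp4]; exact mul_ne_zero he3 h1ne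
          have hp5 : A ^ 5 + B ^ 5 + C ^ 5 = (A * B * C) * (A + B + C) ^ 2 := by
            linear_combination ((A+B+C)^2 - ((A+B+C)^2 - (A^2+B^2+C^2))/2) * h3
              + (A*B*C - (A+B+C) * ((A+B+C)^2 - (A^2+B^2+C^2))/2) * h2
          have h5ne : A ^ 5 + B ^ 5 + C ^ 5 ≠ 0 := by
            rw [hp5]; exact mul_ne_zero he3 (pow_ne_zero 2 h1ne)
          have h4 : U ^ 4 + V ^ 4 = X ^ 4 + Y ^ 4 := key 4 (by norm_num) h4ne
          have h5 : U ^ 5 + V ^ 5 = X ^ 5 + Y ^ 5 := key 5 (by norm_num) h5ne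
          by_contra hne
          have hd : U * V - X * Y ≠ 0 := sub_ne_zero.mpr hne
          have e4 : (U*V - X*Y) * (2*(U*V + X*Y) - 4*(U+V)^2) = 0 := by
            linear_combination h4 - ((U+V)^3 + (U+V)^2*(X+Y) + (U+V)*(X+Y)^2 + (X+Y)^3
              - 4*(X*Y)*((U+V) + (X+Y))) * hS
          have e4' : 2*(U*V + X*Y) - 4*(U+V)^2 = 0 :=
            (mul_eq_zero.mp e4).resolve_left hd
          have e5 : (U*V - X*Y) * (5*(U+V)*((U*V + X*Y) - (U+V)^2)) = 0 := by
            linear_combination h5 - ((U+V)^4 + (U+V)^3*(X+Y) + (U+V)^2*(X+Y)^2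
              + (U+V)*(X+Y)^3 + (X+Y)^4
              - 5*(X*Y)*((U+V)^2 + (U+V)*(X+Y) + (X+Y)^2) + 5*(X*Y)^2) * hS
          have e5' : 5*(U+V)*((U*V + X*Y) - (U+V)^2) = 0 :=
            (mul_eq_zero.mp e5).resolve_left hd
          -- In both cases deduce (U+V)^2 = 0 and then X*Y = -(U*V)
          have hSS : (U + V) ^ 2 = 0 := by
            rcases mul_eq_zero.mp e5' with h5' | h5'
            · rcases mul_eq_zero.mp h5' with h' | h'
              · norm_num at h'
              · rw [h']; ring
            · -- U*V + X*Y = (U+V)^2, combined with e4'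
              linear_combination h5' - e4' / 2
          have hQP : X * Y = -(U * V) := by
            linear_combination e4' / 2 + 2 * hSS
          have h2uv : (2:ℂ) * (U*V)^3 = 0 := by
            linear_combination hprod + ((X*Y)^2 - X*Y*(U*V) + (U*V)^2) * hQP
          have : (U*V)^3 = 0 := by
            rcases mul_eq_zero.mp h2uv with h' | h'
            · norm_num at h'
            · exact h'
          exact hUV (pow_eq_zero_iff (by norm_num) |>.mp this)
        · -- p₂ ≠ 0
          have h2' : U ^ 2 + V ^ 2 = X ^ 2 + Y ^ 2 := key 2 (by norm_num) h2
          linear_combination ((U + V + X + Y)/2) * hS - h2' / 2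
      linear_combination ((U+V)^2 + (U+V)*(X+Y) + (X+Y)^2 - 3*(U*V)) * hS
        - 3*(X+Y) * hPQ
    · exact key 3 (by norm_num) h3
  exact pair_eq_of_sum_prod _ _ _ _ (pow_ne_zero 3 hX) (pow_ne_zero 3 hY) hprod hs
end

section
/- Let U, V, X, Y, A, B, C be nonzero complex numbers such that the multiset {UA, UB, UC, VA, VB, VC} equals {XA, XB, XC, YA, YB, YC}. Then {U^3, V^3} = {X^3, Y^3} as multisets. -/
private theorem pair_multiset_eq (a b c d : ℂ) (hs : a + b = c + d) (hp : a * b = c * d) :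
    ({a, b} : Multiset ℂ) = {c, d} := by
  have h0 : (a - c) * (a - d) = 0 := by linear_combination a * hs - hp
  rcases mul_eq_zero.mp h0 with h' | h'
  · have hac : a = c := by linear_combination h'
    have hbd : b = d := by linear_combination hs - hac
    rw [hac, hbd]
  · have had : a = d := by linear_combination h'
    have hbc : b = c := by linear_combination hs - had
    rw [had, hbc]
    exact Multiset.cons_swap d c 0

theorem cubes_pair_eq_of_multiset_products_eq (U V X Y A B C : ℂ)
    (hU : U ≠ 0) (hV : V ≠ 0) (hX : X ≠ 0) (hY : Y ≠ 0)
    (hA : A ≠ 0) (hB : B ≠ 0) (hC : C ≠ 0)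
    (h : ({U * A, U * B, U * C, V * A, V * B, V * C} : Multiset ℂ)
        = {X * A, X * B, X * C, Y * A, Y * B, Y * C}) :
    ({U ^ 3, V ^ 3} : Multiset ℂ) = {X ^ 3, Y ^ 3} := by
  have h1 := congrArg (fun m : Multiset ℂ => m.sum) h
  have h2 := congrArg (fun m : Multiset ℂ => (m.map (fun z => z ^ 2)).sum) h
  have h3 := congrArg (fun m : Multiset ℂ => (m.map (fun z => z ^ 3)).sum) h
  have h4 := congrArg (fun m : Multiset ℂ => (m.map (fun z => z ^ 4)).sum) h
  have h5 := congrArg (fun m : Multiset ℂ => (m.map (fun z => z ^ 5)).sum) h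
  have hp := congrArg Multiset.prod h
  simp only [Multiset.insert_eq_cons, Multiset.map_cons, Multiset.sum_cons,
    Multiset.map_singleton, Multiset.sum_singleton, Multiset.prod_cons,
    Multiset.prod_singleton] at h1 h2 h3 h4 h5 hp
  have habc : A * B * C ≠ 0 := mul_ne_zero (mul_ne_zero hA hB) hC
  have hq3 : U ^ 3 * V ^ 3 = X ^ 3 * Y ^ 3 := by
    have h' : (U ^ 3 * V ^ 3) * (A * B * C) ^ 2 = (X ^ 3 * Y ^ 3) * (A * B * C) ^ 2 := by
      linear_combination hp
    exact mul_right_cancel₀ (pow_ne_zero 2 habc) h'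
  suffices hsum : U ^ 3 + V ^ 3 = X ^ 3 + Y ^ 3 from
    pair_multiset_eq _ _ _ _ hsum hq3
  by_cases h3π : A ^ 3 + B ^ 3 + C ^ 3 = 0
  · -- then A + B + C ≠ 0
    have h1π : A + B + C ≠ 0 := by
      intro h0
      have h3abc : (3 : ℂ) * (A * B * C) = 0 := by
        linear_combination h3π - (A ^ 2 + B ^ 2 + C ^ 2 - A * B - B * C - A * C) * h0
      exact habc ((mul_eq_zero.mp h3abc).resolve_left (by norm_num))
    have hsUV : U + V = X + Y := by
      apply mul_right_cancel₀ h1π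
      linear_combination h1
    have hY' : Y = U + V - X := by linear_combination -hsUV
    subst hY'
    by_cases hs0 : U + V = 0
    · linear_combination (3 * (U + V) * X - 3 * X ^ 2 - 3 * U * V) * hs0
    · have hq : U * V = X * (U + V - X) := by
        by_cases h2π : A ^ 2 + B ^ 2 + C ^ 2 = 0
        · -- use power sums 4 and 5
          have h6p4 : 6 * (A ^ 4 + B ^ 4 + C ^ 4) = (A + B + C) ^ 4 := by
            linear_combination (3 * (A ^ 2 + B ^ 2 + C ^ 2) - 6 * (A + B + C) ^ 2) * h2π
              + 8 * (A + B + C) * h3π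
          have h6p5 : 6 * (A ^ 5 + B ^ 5 + C ^ 5) = (A + B + C) ^ 5 := by
            linear_combination (5 * (A ^ 3 + B ^ 3 + C ^ 3) - 5 * (A + B + C) ^ 3) * h2π
              + 5 * (A + B + C) ^ 2 * h3π
          have h4π : A ^ 4 + B ^ 4 + C ^ 4 ≠ 0 := by
            intro h0
            exact h1π (pow_eq_zero_iff (n := 4) (by norm_num) |>.mp
              (by linear_combination 6 * h0 - h6p4))
          have h5π : A ^ 5 + B ^ 5 + C ^ 5 ≠ 0 := by
            intro h0
            exact h1π (pow_eq_zero_iff (n := 5) (by norm_num) |>.mp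
              (by linear_combination 6 * h0 - h6p5))
          have E4 : U ^ 4 + V ^ 4 = X ^ 4 + (U + V - X) ^ 4 := by
            apply mul_right_cancel₀ h4π
            linear_combination h4
          have E5 : U ^ 5 + V ^ 5 = X ^ 5 + (U + V - X) ^ 5 := by
            apply mul_right_cancel₀ h5π
            linear_combination h5
          have A4 : (U * V + X * (U + V - X)) * (U * V - X * (U + V - X))
              = 2 * (U + V) ^ 2 * (U * V - X * (U + V - X)) := by
            linear_combination E4 / 2
          have A5 : (U + V) * ((U * V + X * (U + V - X)) * (U * V - X * (U + V - X)))
              = (U + V) ^ 3 * (U * V - X * (U + V - X)) := by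
            linear_combination E5 / 5
          have A6 : (U + V) ^ 3 * (U * V - X * (U + V - X)) = 0 := by
            linear_combination A5 - (U + V) * A4
          rcases mul_eq_zero.mp A6 with h' | h'
          · exact absurd (pow_eq_zero_iff (n := 3) (by norm_num) |>.mp h') hs0
          · linear_combination h'
        · have E2 : U ^ 2 + V ^ 2 = X ^ 2 + (U + V - X) ^ 2 := by
            apply mul_right_cancel₀ h2π
            linear_combination h2
          linear_combination (-1 / 2 : ℂ) * E2
      linear_combination (-3 * (U + V)) * hq
  · apply mul_right_cancel₀ h3π
    linear_combination h3
end

section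
/- Let V be a finite-dimensional irreducible complex representation of a group G such that V is not isomorphic to V ⊗ μ for any nontrivial one-dimensional character μ of G. If a one-dimensional character ν appears in V ⊗ V (i.e., Hom_G(ν, V ⊗ V) ≠ 0), then ν appears with multiplicity exactly one and is the unique character appearing in V ⊗ V. -/
open scoped TensorProduct

/-- A one-dimensional character `ν` of `G` "appears" in `V ⊗ V` if there is a
nonzero vector of `V ⊗ V` on which `G` acts through `ν`. -/
def CharacterAppearsInTensorSquare {G V : Type*} [Group G] [AddCommGroup V]
    [Module ℂ V] (ρ : Representation ℂ G V) (ν : G →* ℂˣ) : Prop :=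
  ∃ w : V ⊗[ℂ] V, w ≠ 0 ∧
    ∀ g : G, TensorProduct.map (ρ g) (ρ g) w = (ν g : ℂ) • w

open Module LinearMap

section Aux

variable {G V : Type*} [Group G] [AddCommGroup V] [Module ℂ V] [FiniteDimensional ℂ V]

/-- The canonical equivalence `V ⊗ V ≃ Hom(V*, V)`. -/
noncomputable def tensorSquareToHom : (V ⊗[ℂ] V) ≃ₗ[ℂ] (Module.Dual ℂ V →ₗ[ℂ] V) :=
  (TensorProduct.congr (Module.evalEquiv ℂ V) (LinearEquiv.refl ℂ V)).trans
    (dualTensorHomEquiv ℂ (Module.Dual ℂ V) V)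

lemma tensorSquareToHom_tmul (v u : V) (f : Module.Dual ℂ V) :
    tensorSquareToHom (v ⊗ₜ[ℂ] u) f = f v • u := by
  simp [tensorSquareToHom, dualTensorHomEquiv, dualTensorHomEquivOfBasis,
    Module.evalEquiv]

lemma tensorSquareToHom_map (ρ : Representation ℂ G V) (g : G) (w : V ⊗[ℂ] V) :
    tensorSquareToHom (TensorProduct.map (ρ g) (ρ g) w)
      = ρ g ∘ₗ (tensorSquareToHom w) ∘ₗ (ρ g).dualMap := by
  induction w using TensorProduct.induction_on with
  | zero => simp
  | tmul v u =>
      ext f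
      simp [tensorSquareToHom_tmul]
  | add x y hx hy =>
      simp only [map_add, hx, hy]
      ext f; simp

/-- Invariant subspaces of the dual are trivial. -/
lemma dual_invariant_trivial (ρ : Representation ℂ G V)
    (hirr : ∀ U : Submodule ℂ V, (∀ (g : G), ∀ v ∈ U, ρ g v ∈ U) → U = ⊥ ∨ U = ⊤)
    (U : Submodule ℂ (Module.Dual ℂ V))
    (hU : ∀ (g : G), ∀ f ∈ U, (ρ g).dualMap f ∈ U) : U = ⊥ ∨ U = ⊤ := by
  rcases hirr U.dualCoannihilator (by
      intro g v hv
      rw [Submodule.mem_dualCoannihilator] at hv ⊢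
      intro f hf
      have := hv _ (hU g f hf)
      simpa using this) with h | h
  · right
    apply Submodule.eq_top_of_finrank_eq
    have h2 := Subspace.finrank_add_finrank_dualCoannihilator_eq U
    rw [h, finrank_bot, add_zero] at h2
    rw [h2, Subspace.dual_finrank_eq]
  · left
    rw [Submodule.eq_bot_iff]
    intro f hf
    ext v
    have : v ∈ U.dualCoannihilator := h ▸ Submodule.mem_top
    rw [Submodule.mem_dualCoannihilator] at this
    simpa using this f hf

end Aux

section Aux2

variable {G V : Type*} [Group G] [AddCommGroup V] [Module ℂ V] [FiniteDimensional ℂ V]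

omit [FiniteDimensional ℂ V] in
lemma rep_inv_self (ρ : Representation ℂ G V) (g : G) (v : V) :
    ρ g⁻¹ (ρ g v) = v := by
  have h : ρ g⁻¹ * ρ g = 1 := by rw [← map_mul]; simp
  calc ρ g⁻¹ (ρ g v) = (ρ g⁻¹ * ρ g) v := rfl
    _ = v := by rw [h]; rfl

omit [FiniteDimensional ℂ V] in
lemma rep_self_inv (ρ : Representation ℂ G V) (g : G) (v : V) :
    ρ g (ρ g⁻¹ v) = v := by
  simpa using rep_inv_self ρ g⁻¹ v

/-- Schur: a nonzero twisted intertwiner `V* → V` is bijective. -/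
lemma intertwiner_bijective (ρ : Representation ℂ G V)
    (hirr : ∀ U : Submodule ℂ V, (∀ (g : G), ∀ v ∈ U, ρ g v ∈ U) → U = ⊥ ∨ U = ⊤)
    (ν : G →* ℂˣ) (T : Module.Dual ℂ V →ₗ[ℂ] V) (hT0 : T ≠ 0)
    (hT : ∀ (g : G) (f : Module.Dual ℂ V),
      ρ g (T ((ρ g).dualMap f)) = (ν g : ℂ) • T f) :
    Function.Bijective T := by
  constructor
  · -- injective: kernel is invariant
    rw [← LinearMap.ker_eq_bot]
    rcases dual_invariant_trivial ρ hirr (LinearMap.ker T) (by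
        intro g f hf
        rw [LinearMap.mem_ker] at hf ⊢
        have h1 := hT g f
        rw [hf, smul_zero] at h1
        have h2 := congrArg (ρ g⁻¹) h1
        simpa [rep_inv_self ρ g] using h2) with h | h
    · exact h
    · exfalso
      exact hT0 (LinearMap.ext fun f => by
        have : f ∈ LinearMap.ker T := h ▸ Submodule.mem_top
        simpa using this)
  · -- surjective: range is invariant
    rw [← LinearMap.range_eq_top]
    rcases hirr (LinearMap.range T) (by
        intro g v hv
        rw [LinearMap.mem_range] at hv
        obtain ⟨f, rfl⟩ := hv
        have key := hT g ((ρ g⁻¹).dualMap f)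
        have hdd : (ρ g).dualMap ((ρ g⁻¹).dualMap f) = f := by
          ext u
          simp [dualMap_apply, rep_inv_self ρ g]
        rw [hdd] at key
        exact ⟨(ν g : ℂ) • (ρ g⁻¹).dualMap f, by rw [map_smul, ← key]⟩) with h | h
    · exfalso
      exact hT0 (LinearMap.ext fun f => by
        have : T f ∈ LinearMap.range T := LinearMap.mem_range_self T f
        rw [h] at this
        simpa using this)
    · exact h

end Aux2

section Aux3

variable {G V : Type*} [Group G] [AddCommGroup V] [Module ℂ V] [FiniteDimensional ℂ V]

lemma eigen_pointwise (ρ : Representation ℂ G V) (ν₀ : G →* ℂˣ) (w : V ⊗[ℂ] V)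
    (hw : ∀ g : G, TensorProduct.map (ρ g) (ρ g) w = (ν₀ g : ℂ) • w) :
    ∀ (g : G) (f : Module.Dual ℂ V),
      ρ g (tensorSquareToHom w ((ρ g).dualMap f)) = (ν₀ g : ℂ) • tensorSquareToHom w f := by
  intro g f
  have h1 : tensorSquareToHom (TensorProduct.map (ρ g) (ρ g) w)
      = (ν₀ g : ℂ) • (tensorSquareToHom w : Module.Dual ℂ V →ₗ[ℂ] V) := by
    rw [hw g, map_smul]
  rw [tensorSquareToHom_map] at h1
  exact congrArg (fun (T : Module.Dual ℂ V →ₗ[ℂ] V) => T f) h1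

lemma exists_twist (ρ : Representation ℂ G V)
    (hirr : ∀ U : Submodule ℂ V, (∀ (g : G), ∀ v ∈ U, ρ g v ∈ U) → U = ⊥ ∨ U = ⊤)
    (ν₁ ν₂ : G →* ℂˣ) (w₁ w₂ : V ⊗[ℂ] V) (h1 : w₁ ≠ 0) (h2 : w₂ ≠ 0)
    (hw₁ : ∀ g : G, TensorProduct.map (ρ g) (ρ g) w₁ = (ν₁ g : ℂ) • w₁)
    (hw₂ : ∀ g : G, TensorProduct.map (ρ g) (ρ g) w₂ = (ν₂ g : ℂ) • w₂) :
    ∃ S : V ≃ₗ[ℂ] V,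
      (∀ (g : G) (v : V), S (ρ g v) = ((ν₁ g : ℂ) * ((ν₂ g : ℂ))⁻¹) • ρ g (S v)) ∧
      ∀ f : Module.Dual ℂ V, S (tensorSquareToHom w₁ f) = tensorSquareToHom w₂ f := by
  set T₁ : Module.Dual ℂ V →ₗ[ℂ] V := tensorSquareToHom w₁ with hT₁def
  set T₂ : Module.Dual ℂ V →ₗ[ℂ] V := tensorSquareToHom w₂ with hT₂def
  have hT₁ := eigen_pointwise ρ ν₁ w₁ hw₁
  have hT₂ := eigen_pointwise ρ ν₂ w₂ hw₂
  have hT₁0 : T₁ ≠ 0 := by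
    simpa [hT₁def] using (map_ne_zero_iff _ tensorSquareToHom.injective).mpr h1
  have hT₂0 : T₂ ≠ 0 := by
    simpa [hT₂def] using (map_ne_zero_iff _ tensorSquareToHom.injective).mpr h2
  have bij₁ := intertwiner_bijective ρ hirr ν₁ T₁ hT₁0 hT₁
  have bij₂ := intertwiner_bijective ρ hirr ν₂ T₂ hT₂0 hT₂
  set E₁ := LinearEquiv.ofBijective T₁ bij₁ with hE₁def
  set E₂ := LinearEquiv.ofBijective T₂ bij₂ with hE₂def
  refine ⟨E₁.symm.trans E₂, ?_, ?_⟩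
  · intro g v
    have claim1 : E₁.symm (ρ g v)
        = (ν₁ g : ℂ) • (ρ g⁻¹).dualMap (E₁.symm v) := by
      apply E₁.injective
      rw [E₁.apply_symm_apply, map_smul]
      have key := hT₁ g⁻¹ (E₁.symm v)
      have hv : T₁ (E₁.symm v) = v := E₁.apply_symm_apply v
      rw [hv] at key
      have key2 := congrArg (ρ g) key
      rw [rep_self_inv ρ g] at key2
      have : E₁ ((ρ g⁻¹).dualMap (E₁.symm v)) = T₁ ((ρ g⁻¹).dualMap (E₁.symm v)) := rfl
      rw [this, key2, map_smul, smul_smul]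
      have : (ν₁ g : ℂ) * ((ν₁ g⁻¹ : ℂˣ) : ℂ) = 1 := by
        rw [← Units.val_mul]; simp
      rw [this, one_smul]
    simp only [LinearEquiv.trans_apply, claim1, map_smul]
    have key := hT₂ g⁻¹ (E₁.symm v)
    have key2 := congrArg (ρ g) key
    rw [rep_self_inv ρ g, map_smul] at key2
    have hE2 : E₂ ((ρ g⁻¹).dualMap (E₁.symm v)) = T₂ ((ρ g⁻¹).dualMap (E₁.symm v)) := rfl
    rw [hE2, key2, smul_smul]
    have : ((ν₂ g⁻¹ : ℂˣ) : ℂ) = ((ν₂ g : ℂ))⁻¹ := by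
      rw [map_inv]; simp
    rw [this]
    rfl
  · intro f
    simp only [LinearEquiv.trans_apply]
    have : E₁.symm (T₁ f) = f := E₁.symm_apply_apply f
    rw [hT₁def, hT₂def] at *
    rw [this]
    rfl

end Aux3

theorem unique_character_in_tensor_square
    {G V : Type*} [Group G] [AddCommGroup V] [Module ℂ V]
    [FiniteDimensional ℂ V]
    (ρ : Representation ℂ G V)
    (hirr : ∀ U : Submodule ℂ V, (∀ (g : G), ∀ v ∈ U, ρ g v ∈ U) →
      U = ⊥ ∨ U = ⊤)
    (hnotwist : ∀ μ : G →* ℂˣ, μ ≠ 1 →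
      ¬ ∃ e : V ≃ₗ[ℂ] V, ∀ (g : G) (v : V), e (ρ g v) = (μ g : ℂ) • ρ g (e v))
    (ν : G →* ℂˣ) (hν : CharacterAppearsInTensorSquare ρ ν) :
    (∀ ν' : G →* ℂˣ, CharacterAppearsInTensorSquare ρ ν' → ν' = ν) ∧
    ∀ w₁ w₂ : V ⊗[ℂ] V, w₁ ≠ 0 →
      (∀ g : G, TensorProduct.map (ρ g) (ρ g) w₁ = (ν g : ℂ) • w₁) →
      (∀ g : G, TensorProduct.map (ρ g) (ρ g) w₂ = (ν g : ℂ) • w₂) →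
      ∃ c : ℂ, w₂ = c • w₁ := by
  obtain ⟨w₀, hw₀0, hw₀⟩ := hν
  constructor
  · -- uniqueness of the character
    rintro ν' ⟨w', hw'0, hw'⟩
    obtain ⟨S, hS, -⟩ := exists_twist ρ hirr ν ν' w₀ w' hw₀0 hw'0 hw₀ hw'
    by_contra hne
    refine hnotwist (ν * ν'⁻¹) ?_ ⟨S, ?_⟩
    · intro h
      exact hne (mul_inv_eq_one.mp h).symm
    · intro g v
      have : (((ν * ν'⁻¹) g : ℂˣ) : ℂ) = (ν g : ℂ) * ((ν' g : ℂ))⁻¹ := by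
        simp
      rw [this]
      exact hS g v
  · -- multiplicity one
    intro w₁ w₂ hw₁0 hw₁ hw₂
    rcases eq_or_ne w₂ 0 with rfl | hw₂0
    · exact ⟨0, by simp⟩
    obtain ⟨S, hS, hSf⟩ := exists_twist ρ hirr ν ν w₁ w₂ hw₁0 hw₂0 hw₁ hw₂
    have hScomm : ∀ (g : G) (v : V), S (ρ g v) = ρ g (S v) := by
      intro g v
      rw [hS g v]
      have : (ν g : ℂ) * ((ν g : ℂ))⁻¹ = 1 := mul_inv_cancel₀ (Units.ne_zero _)
      rw [this, one_smul]
    -- Schur: S is scalar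
    have hVnt : Nontrivial V := by
      by_contra h
      rw [not_nontrivial_iff_subsingleton] at h
      exact hw₁0 (Subsingleton.elim _ _)
    obtain ⟨c, hc⟩ := Module.End.exists_eigenvalue (S : V →ₗ[ℂ] V)
    have hE : Module.End.eigenspace (S : V →ₗ[ℂ] V) c = ⊤ := by
      rcases hirr (Module.End.eigenspace (S : V →ₗ[ℂ] V) c) (by
          intro g v hv
          rw [Module.End.mem_eigenspace_iff] at hv ⊢
          calc (S : V →ₗ[ℂ] V) (ρ g v) = S (ρ g v) := rfl
            _ = ρ g (S v) := hScomm g v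
            _ = ρ g (c • v) := by rw [← hv]; rfl
            _ = c • ρ g v := by rw [map_smul]) with h | h
      · exact absurd h hc
      · exact h
    have hSc : ∀ v : V, S v = c • v := by
      intro v
      have : v ∈ Module.End.eigenspace (S : V →ₗ[ℂ] V) c := hE ▸ Submodule.mem_top
      rw [Module.End.mem_eigenspace_iff] at this
      exact this
    refine ⟨c, ?_⟩
    apply tensorSquareToHom.injective
    rw [map_smul]
    ext f
    have := hSf f
    rw [hSc] at this
    rw [← this]
    rfl
end
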